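/- arXiv:2311.15601 — 3 statements merged into one kernel-verified Lean document; each statement's English description precedes it below -/
import Mathlib

section
/- Let Φ : ℝ → ℝ be a strictly decreasing bijection and I₀ a bounded open interval such that I₀ ∩ Φ(I₀) = ∅ and I₀ ∩ Φ²(I₀) = ∅. Then Φ^j(I₀) ∩ Φ^k(I₀) = ∅ for all distinct natural numbers j, k. -/
theorem stmt7 (Φ : ℝ → ℝ) (ha : StrictAnti Φ) (hb : Function.Bijective Φ)
    (a b : ℝ) (hab : a < b)
    (h1 : Set.Ioo a b ∩ (Φ '' Set.Ioo a b) = ∅)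
    (h2 : Set.Ioo a b ∩ (Φ^[2] '' Set.Ioo a b) = ∅) :
    ∀ j k : ℕ, j ≠ k → (Φ^[j] '' Set.Ioo a b) ∩ (Φ^[k] '' Set.Ioo a b) = ∅ := by
  set g : ℝ → ℝ := Φ ∘ Φ with hg
  have hgmono : StrictMono g := fun x y h => ha (ha h)
  have hΦ2 : Φ^[2] = g := by funext x; rfl
  have hΦ2m : ∀ m, Φ^[2*m] = g^[m] := by
    intro m; rw [Function.iterate_mul, hΦ2]
  -- consequences of h1
  have h1' : Φ a ≤ a ∨ b ≤ Φ b := by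
    by_contra hcon
    push_neg at hcon
    obtain ⟨haa, hbb⟩ := hcon
    have hba : Φ b < Φ a := ha hab
    have hlt : max a (Φ b) < min b (Φ a) := by
      simp only [lt_min_iff, max_lt_iff]
      exact ⟨⟨hab, hbb⟩, haa, hba⟩
    obtain ⟨y, hy⟩ := Set.nonempty_Ioo.mpr hlt
    obtain ⟨x, hx⟩ := hb.2 y
    apply Set.eq_empty_iff_forall_notMem.mp h1 y
    refine ⟨⟨lt_of_le_of_lt (le_max_left _ _) hy.1,
            lt_of_lt_of_le hy.2 (min_le_left _ _)⟩, x, ⟨?_, ?_⟩, hx⟩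
    · by_contra hxa
      push_neg at hxa
      have h3 : Φ a ≤ Φ x := ha.antitone hxa
      rw [hx] at h3
      exact absurd (lt_of_lt_of_le hy.2 (min_le_right _ _)) (not_lt.mpr h3)
    · by_contra hxb
      push_neg at hxb
      have h3 : Φ x ≤ Φ b := ha.antitone hxb
      rw [hx] at h3
      exact absurd (lt_of_le_of_lt (le_max_right _ _) hy.1) (not_lt.mpr h3)
  -- consequences of h2
  have h2' : b ≤ g a ∨ g b ≤ a := by
    by_contra hcon
    push_neg at hcon
    obtain ⟨haa, hbb⟩ := hcon
    have hba : g a < g b := hgmono hab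
    have hlt : max a (g a) < min b (g b) := by
      simp only [lt_min_iff, max_lt_iff]
      exact ⟨⟨hab, haa⟩, hbb, hba⟩
    obtain ⟨y, hy⟩ := Set.nonempty_Ioo.mpr hlt
    have hgb : Function.Bijective g := hb.comp hb
    obtain ⟨x, hx⟩ := hgb.2 y
    apply Set.eq_empty_iff_forall_notMem.mp h2 y
    rw [hΦ2]
    refine ⟨⟨lt_of_le_of_lt (le_max_left _ _) hy.1,
            lt_of_lt_of_le hy.2 (min_le_left _ _)⟩, x, ⟨?_, ?_⟩, hx⟩
    · by_contra hxa
      push_neg at hxa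
      have h3 : g x ≤ g a := hgmono.monotone hxa
      rw [hx] at h3
      exact absurd (lt_of_le_of_lt (le_max_right _ _) hy.1) (not_lt.mpr h3)
    · by_contra hxb
      push_neg at hxb
      have h3 : g b ≤ g x := hgmono.monotone hxb
      rw [hx] at h3
      exact absurd (lt_of_lt_of_le hy.2 (min_le_right _ _)) (not_lt.mpr h3)
  -- key lemma: iterates of points of I leave I forever
  have key : ∀ n : ℕ, ∀ x ∈ Set.Ioo a b, Φ^[n+1] x ∉ Set.Ioo a b := by
    rcases h2' with hE | hE
    · -- b ≤ g a : even iterates go up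
      have hA : ∀ m : ℕ, ∀ t, b ≤ t → b ≤ g^[m] t := by
        intro m
        induction m with
        | zero => intro t ht; exact ht
        | succ m ih =>
          intro t ht
          rw [Function.iterate_succ_apply]
          exact ih _ (le_trans hE (hgmono (lt_of_lt_of_le hab ht)).le)
      intro n x hx
      obtain ⟨hxa, hxb⟩ := hx
      rcases Nat.even_or_odd n with ⟨m, hm⟩ | ⟨m, hm⟩
      · -- n = m + m, odd iterate Φ^[2m+1]
        have h2m : Φ^[m+m] = g^[m] := by rw [← two_mul]; exact hΦ2m m
        rcases h1' with hO | hO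
        · -- Φ a ≤ a : show Φ^[2m+1] x ≤ a
          have hle : Φ^[n+1] x ≤ a := by
            rw [hm, Function.iterate_succ_apply', h2m]
            cases m with
            | zero =>
              simpa using le_of_lt (lt_of_lt_of_le (ha hxa) hO)
            | succ m' =>
              have hgx : b ≤ g^[m'] (g x) := hA m' _ (le_trans hE (hgmono hxa).le)
              rw [Function.iterate_succ_apply]
              calc Φ (g^[m'] (g x)) ≤ Φ b := ha.antitone hgx
                _ ≤ Φ a := (ha hab).le
                _ ≤ a := hO
          exact fun hmem => absurd hmem.1 (not_lt.mpr hle)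
        · -- b ≤ Φ b : show b ≤ Φ^[2m+1] x
          have hle : b ≤ Φ^[n+1] x := by
            rw [hm, Function.iterate_succ_apply, h2m]
            exact hA m _ (le_trans hO (ha hxb).le)
          exact fun hmem => absurd hmem.2 (not_lt.mpr hle)
      · -- n = 2m+1, even iterate Φ^[2m+2] = g^[m+1]
        have hn1 : n + 1 = 2 * (m + 1) := by omega
        have hle : b ≤ Φ^[n+1] x := by
          rw [hn1, hΦ2m, Function.iterate_succ_apply]
          exact hA m _ (le_trans hE (hgmono hxa).le)
        exact fun hmem => absurd hmem.2 (not_lt.mpr hle)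
    · -- g b ≤ a : even iterates go down
      have hA : ∀ m : ℕ, ∀ t, t ≤ a → g^[m] t ≤ a := by
        intro m
        induction m with
        | zero => intro t ht; exact ht
        | succ m ih =>
          intro t ht
          rw [Function.iterate_succ_apply]
          exact ih _ (le_trans (hgmono (lt_of_le_of_lt ht hab)).le hE)
      intro n x hx
      obtain ⟨hxa, hxb⟩ := hx
      rcases Nat.even_or_odd n with ⟨m, hm⟩ | ⟨m, hm⟩
      · have h2m : Φ^[m+m] = g^[m] := by rw [← two_mul]; exact hΦ2m m
        rcases h1' with hO | hO
        · -- Φ a ≤ a : show Φ^[2m+1] x ≤ a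
          have hle : Φ^[n+1] x ≤ a := by
            rw [hm, Function.iterate_succ_apply, h2m]
            exact hA m _ (le_trans (ha hxa).le hO)
          exact fun hmem => absurd hmem.1 (not_lt.mpr hle)
        · -- b ≤ Φ b : show b ≤ Φ^[2m+1] x
          have hle : b ≤ Φ^[n+1] x := by
            rw [hm, Function.iterate_succ_apply', h2m]
            cases m with
            | zero =>
              simpa using le_of_lt (lt_of_le_of_lt hO (ha hxb))
            | succ m' =>
              have hgx : g^[m'] (g x) ≤ a := hA m' _ (le_trans (hgmono hxb).le hE)
              rw [Function.iterate_succ_apply]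
              calc b ≤ Φ b := hO
                _ ≤ Φ a := (ha hab).le
                _ ≤ Φ (g^[m'] (g x)) := ha.antitone hgx
          exact fun hmem => absurd hmem.2 (not_lt.mpr hle)
      · have hn1 : n + 1 = 2 * (m + 1) := by omega
        have hle : Φ^[n+1] x ≤ a := by
          rw [hn1, hΦ2m, Function.iterate_succ_apply]
          exact hA m _ (le_trans (hgmono hxb).le hE)
        exact fun hmem => absurd hmem.1 (not_lt.mpr hle)
  -- main lemma for j < k
  have main : ∀ j k : ℕ, j < k →
      (Φ^[j] '' Set.Ioo a b) ∩ (Φ^[k] '' Set.Ioo a b) = ∅ := by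
    intro j k hjk
    rw [Set.eq_empty_iff_forall_notMem]
    rintro y ⟨⟨u, hu, huy⟩, ⟨v, hv, hvy⟩⟩
    have hinj : Function.Injective (Φ^[j]) := hb.1.iterate j
    have hk : k = j + (k - j) := (Nat.add_sub_cancel' hjk.le).symm
    have heq : Φ^[j] u = Φ^[j] (Φ^[k-j] v) := by
      rw [huy, ← hvy]
      conv_lhs => rw [hk]
      rw [Function.iterate_add_apply]
    have huv : u = Φ^[k-j] v := hinj heq
    obtain ⟨d, hd⟩ : ∃ d, k - j = d + 1 :=
      ⟨k - j - 1, (Nat.succ_pred_eq_of_pos (Nat.sub_pos_of_lt hjk)).symm⟩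
    apply key d v hv
    rw [← hd, ← huv]
    exact hu
  intro j k hjk
  rcases lt_or_gt_of_ne hjk with h | h
  · exact main j k h
  · rw [Set.inter_comm]; exact main k j h
end

section
/- Let h : ℝ → ℂ be an even Schwartz function and k₁, k₂ real numbers with k₁k₂ = 1, k₁ ≠ −1. Define u(x,t) = h((1−k₁)/(1+k₁)·(x+t)) − h(x−t). Then u solves the wave equation ∂²u/∂t² − ∂²u/∂x² = 0 on ℝ², and u(x, k₁x) = 0 and u(x, k₂x) = 0 for all x ∈ ℝ. -/
lemma hda15 (h : ℝ → ℂ) (hd : Differentiable ℝ h) (a b s : ℝ) :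
    HasDerivAt (fun r => h (a*r+b)) (a • deriv h (a*s+b)) s := by
  have := ((hd (a*s+b)).hasDerivAt).scomp s (((hasDerivAt_id s).const_mul a).add_const b)
  simpa [Function.comp_def] using this

lemma d215 (h : ℝ → ℂ) (hs : ContDiff ℝ (⊤ : ℕ∞) h) (a b a' b' t : ℝ) :
    deriv (fun s => deriv (fun r => h (a*r+b) - h (a'*r+b')) s) t
      = (a*a) • deriv (deriv h) (a*t+b) - (a'*a') • deriv (deriv h) (a'*t+b') := by
  have hd := hs.differentiable (by simp)
  have hd1 : Differentiable ℝ (deriv h) :=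
    (contDiff_infty_iff_deriv.mp (hs.of_le (by simp))).2.differentiable (by norm_num)
  have e : (fun s => deriv (fun r => h (a*r+b) - h (a'*r+b')) s)
      = fun s => a • deriv h (a*s+b) - a' • deriv h (a'*s+b') := by
    funext s
    exact ((hda15 h hd a b s).sub (hda15 h hd a' b' s)).deriv
  rw [e]
  have h1 : HasDerivAt (fun s => a • deriv h (a*s+b) - a' • deriv h (a'*s+b'))
      (a • a • deriv (deriv h) (a*t+b) - a' • a' • deriv (deriv h) (a'*t+b')) t := ((hda15 (deriv h) hd1 a b t).const_smul a).sub
    ((hda15 (deriv h) hd1 a' b' t).const_smul a')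
  rw [h1.deriv, smul_smul, smul_smul]

theorem stmt15 (h : ℝ → ℂ) (hs : ContDiff ℝ (⊤ : ℕ∞) h) (he : ∀ y : ℝ, h (-y) = h y)
    (k₁ k₂ : ℝ) (hk : k₁ * k₂ = 1) (hne : k₁ ≠ -1)
    (u : ℝ → ℝ → ℂ)
    (hu : ∀ x t : ℝ, u x t = h (((1 - k₁) / (1 + k₁)) * (x + t)) - h (x - t)) :
    (∀ x t : ℝ,
        deriv (fun t' => deriv (fun t'' => u x t'') t') t -
          deriv (fun x' => deriv (fun x'' => u x'' t) x') x = 0) ∧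
    (∀ x : ℝ, u x (k₁ * x) = 0) ∧ (∀ x : ℝ, u x (k₂ * x) = 0) := by
  set c := (1 - k₁) / (1 + k₁) with hc
  have h1k : (1 + k₁) ≠ 0 := by
    intro hh; apply hne; linarith
  refine ⟨?_, ?_, ?_⟩
  · intro x t
    have e1 : (fun t'' => u x t'') = fun s => h (c*s + c*x) - h ((-1)*s + x) := by
      funext s
      rw [hu, show c*(x+s) = c*s + c*x by ring, show x - s = (-1)*s + x by ring]
    have e2 : (fun x'' => u x'' t) = fun s => h (c*s + c*t) - h (1*s + (-t)) := by
      funext s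
      rw [hu, show c*(s+t) = c*s + c*t by ring, show s - t = 1*s + (-t) by ring]
    rw [show (fun t' => deriv (fun t'' => u x t'') t') = (fun t' => deriv (fun s => h (c*s + c*x) - h ((-1)*s + x)) t') from by rw [e1],
        show (fun x' => deriv (fun x'' => u x'' t) x') = (fun x' => deriv (fun s => h (c*s + c*t) - h (1*s + (-t))) x') from by rw [e2],
        d215 h hs c (c*x) (-1) x t, d215 h hs c (c*t) 1 (-t) x,
        show c*t + c*x = c*x + c*t by ring, show (-1:ℝ)*t + x = 1*x + (-t) by ring]
    norm_num
  · intro x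
    have : c * (x + k₁ * x) = x - k₁ * x := by
      rw [hc]; field_simp
    rw [hu, this, sub_self]
  · intro x
    have harg : c * (x + k₂ * x) = -(x - k₂ * x) := by
      rw [hc]; field_simp; linear_combination (-2*x) * hk
    rw [hu, harg, he, sub_self]
end

section
/- Let λ > 1, a₀ > 0, a_n = λa₀ − (1/2)^n(λ−1)a₀, I_j⁺ = (λ^j a_j, λ^j a_{j+1}) for j ≥ 0, and Φ(ξ) = ξ/λ. Then for every j ≥ 0 and every integer k with 0 < k ≤ j, the interval Φ^k(I_j⁺) lies strictly between I_{j−k}⁺ and I_{j−k+1}⁺ (i.e. λ^{j−k}a_{j−k+1} ≤ λ^{j−k}a_j and λ^{j−k}a_{j+1} < λ^{j−k+1}a_{j−k+1}); in particular Φ^k(I_j⁺) is disjoint from ⋃_{m≥0} I_m⁺. -/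
theorem stmt19 (lam a₀ : ℝ) (hlam : 1 < lam) (ha₀ : 0 < a₀)
    (a : ℕ → ℝ) (ha : ∀ n : ℕ, a n = lam * a₀ - (1 / 2) ^ n * (lam - 1) * a₀)
    (Φ : ℝ → ℝ) (hΦ : ∀ ξ, Φ ξ = ξ / lam) :
    ∀ j k : ℕ, 0 < k → k ≤ j →
      (lam ^ (j - k) * a (j - k + 1) ≤ lam ^ (j - k) * a j ∧
        lam ^ (j - k) * a (j + 1) < lam ^ (j - k + 1) * a (j - k + 1)) ∧
      (∀ m : ℕ,
        (Φ^[k] '' Set.Ioo (lam ^ j * a j) (lam ^ j * a (j + 1))) ∩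
          Set.Ioo (lam ^ m * a m) (lam ^ m * a (m + 1)) = ∅) := by
  have hl0 : (0:ℝ) < lam := by linarith
  have ha0le : ∀ n : ℕ, a₀ ≤ a n := by
    intro n
    have h1 : ((1:ℝ)/2) ^ n ≤ 1 := pow_le_one₀ (by norm_num) (by norm_num)
    have h2 : (0:ℝ) < lam - 1 := by linarith
    rw [ha]
    nlinarith [mul_nonneg (mul_nonneg (sub_nonneg.2 h1) h2.le) ha₀.le]
  have hpos : ∀ n : ℕ, 0 < a n := fun n => lt_of_lt_of_le ha₀ (ha0le n)
  have hlt : ∀ n : ℕ, a n < lam * a₀ := by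
    intro n
    have h1 : (0:ℝ) < ((1:ℝ)/2) ^ n := by positivity
    have h2 : (0:ℝ) < lam - 1 := by linarith
    rw [ha]
    nlinarith [mul_pos (mul_pos h1 h2) ha₀]
  have hmono : ∀ n m : ℕ, n ≤ m → a n ≤ a m := by
    intro n m hnm
    have h1 : ((1:ℝ)/2) ^ m ≤ ((1:ℝ)/2) ^ n :=
      pow_le_pow_of_le_one (by norm_num) (by norm_num) hnm
    have h2 : (0:ℝ) < lam - 1 := by linarith
    rw [ha, ha]
    nlinarith [mul_nonneg (mul_nonneg (sub_nonneg.2 h1) h2.le) ha₀.le]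
  have hiter : ∀ (k : ℕ) (x : ℝ), Φ^[k] x = x / lam ^ k := by
    intro k
    induction k with
    | zero => simp
    | succ n ih =>
      intro x
      rw [Function.iterate_succ_apply', ih, hΦ]
      rw [div_div, pow_succ]
  intro j k hk hkj
  have h1 : a (j - k + 1) ≤ a j := hmono _ _ (by omega)
  have h2 : a (j + 1) < lam * a (j - k + 1) :=
    lt_of_lt_of_le (hlt _) (mul_le_mul_of_nonneg_left (ha0le _) hl0.le)
  have hpj : (0:ℝ) < lam ^ (j - k) := pow_pos hl0 _
  refine ⟨⟨mul_le_mul_of_nonneg_left h1 hpj.le, ?_⟩, ?_⟩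
  · rw [pow_succ, mul_assoc]
    exact mul_lt_mul_of_pos_left h2 hpj
  · intro m
    ext x
    simp only [Set.mem_inter_iff, Set.mem_image, Set.mem_Ioo, Set.mem_empty_iff_false,
      iff_false, not_and]
    rintro ⟨y, ⟨hy1, hy2⟩, rfl⟩ hx1 hx2
    rw [hiter] at hx1 hx2
    have hpk : (0:ℝ) < lam ^ k := pow_pos hl0 _
    have hjk : lam ^ (j - k) * lam ^ k = lam ^ j := by
      rw [← pow_add]; congr 1; omega
    have hb1 : lam ^ (j - k) * a j < y / lam ^ k := by
      rw [lt_div_iff₀ hpk]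
      calc lam ^ (j - k) * a j * lam ^ k = lam ^ j * a j := by
            rw [mul_right_comm, hjk]
        _ < y := hy1
    have hb2 : y / lam ^ k < lam ^ (j - k) * a (j + 1) := by
      rw [div_lt_iff₀ hpk]
      calc y < lam ^ j * a (j + 1) := hy2
        _ = lam ^ (j - k) * a (j + 1) * lam ^ k := by rw [mul_right_comm, hjk]
    rcases le_or_gt m (j - k) with hm | hm
    · have key : lam ^ m * a (m + 1) ≤ lam ^ (j - k) * a j :=
        mul_le_mul (pow_le_pow_right₀ hlam.le hm) (hmono _ _ (by omega))
          (hpos _).le hpj.le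
      linarith
    · have key : lam ^ (j - k + 1) * a (j - k + 1) ≤ lam ^ m * a m :=
        mul_le_mul (pow_le_pow_right₀ hlam.le hm) (hmono _ _ hm)
          (hpos _).le (pow_pos hl0 _).le
      have h3 : lam ^ (j - k) * a (j + 1) < lam ^ (j - k + 1) * a (j - k + 1) := by
        rw [pow_succ, mul_assoc]
        exact mul_lt_mul_of_pos_left h2 hpj
      linarith
end
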